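/- arXiv:1301.1725 — 4 statements merged into one kernel-verified Lean document; each statement's English description precedes it below -/
import Mathlib

section
/- Let (ξ,η,ζ) be a good triple of non-integer reals such that none of ±ξ±η±ζ is an integer. Define φ, θ : {±1} → {±1} by φ(ε) = (-1)^⌊ξ+η+εζ⌋ and θ(ε) = (-1)^⌊ξ-η+εζ⌋. Then φ ≠ θ, and at least one of φ, θ is a bijection. -/
/-- The distance from a real number to the nearest integer. -/
noncomputable def psi (x : ℝ) : ℝ := |x - round x|

/-- A triple of reals is *good* if twice the maximum of the distances of its entries to
the nearest integer is less than the sum of these distances. -/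
def Good (ξ η ζ : ℝ) : Prop :=
  2 * max (psi ξ) (max (psi η) (psi ζ)) < psi ξ + psi η + psi ζ

private lemma pow_ne' (m n : ℤ) (h : m % 2 ≠ n % 2) : ((-1:ℤˣ))^m ≠ (-1:ℤˣ)^n := by
  intro he
  have hodd : Odd (m - n) := Int.odd_iff.mpr (by omega)
  obtain ⟨k, hk⟩ := hodd
  have h2 : ((-1:ℤˣ))^(m - n) = 1 := by rw [zpow_sub, he]; simp
  rw [hk, zpow_add, zpow_mul, show ((-1:ℤˣ))^(2:ℤ) = 1 by decide] at h2
  simp at h2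

private lemma bij_of' (f : ℤˣ → ℤˣ) (h : f 1 ≠ f (-1)) : Function.Bijective f := by
  rw [← Finite.injective_iff_bijective]
  intro x y hxy
  rcases Int.units_eq_one_or x with rfl | rfl <;>
    rcases Int.units_eq_one_or y with rfl | rfl <;> simp_all

private lemma floor_zero' (x : ℝ) (h1 : 0 ≤ x) (h2 : x < 1) : ⌊x⌋ = 0 :=
  Int.floor_eq_zero_iff.mpr ⟨h1, h2⟩

private lemma floor_negone' (x : ℝ) (h1 : -1 ≤ x) (h2 : x < 0) : ⌊x⌋ = -1 :=
  Int.floor_eq_iff.mpr ⟨by push_cast; linarith, by push_cast; linarith⟩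

private lemma tri' (p q r : ℝ) (h : 2 * max p (max q r) < p + q + r) :
    p < q + r ∧ q < p + r ∧ r < p + q := by
  have h1 := le_max_left p (max q r)
  have h2 := le_max_left q r
  have h3 := le_max_right q r
  have h4 := le_max_right p (max q r)
  exact ⟨by linarith, by linarith [h2.trans h4], by linarith [h3.trans h4]⟩

theorem lemma1 (ξ η ζ : ℝ) (hgood : Good ξ η ζ)
    (hnonint : ∀ (ε₁ ε₂ ε₃ : ℝ), (ε₁ = 1 ∨ ε₁ = -1) → (ε₂ = 1 ∨ ε₂ = -1) →
      (ε₃ = 1 ∨ ε₃ = -1) → ∀ n : ℤ, ε₁ * ξ + ε₂ * η + ε₃ * ζ ≠ (n : ℝ))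
    (hξ : ∀ n : ℤ, ξ ≠ (n : ℝ)) (hη : ∀ n : ℤ, η ≠ (n : ℝ))
    (hζ : ∀ n : ℤ, ζ ≠ (n : ℝ))
    (φ θ : ℤˣ → ℤˣ)
    (hφ : ∀ ε : ℤˣ, φ ε = (-1 : ℤˣ) ^ (⌊ξ + η + (ε : ℤ) * ζ⌋))
    (hθ : ∀ ε : ℤˣ, θ ε = (-1 : ℤˣ) ^ (⌊ξ - η + (ε : ℤ) * ζ⌋)) :
    φ ≠ θ ∧ (Function.Bijective φ ∨ Function.Bijective θ) := by
  obtain ⟨u1, u2, u3⟩ := tri' (psi ξ) (psi η) (psi ζ) hgood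
  set A := ξ - round ξ with hA
  set B := η - round η with hB
  set C := ζ - round ζ with hC
  have t1 : |A| < |B| + |C| := u1
  have t2 : |B| < |A| + |C| := u2
  have t3 : |C| < |A| + |B| := u3
  have habs1 : |A| ≤ 1/2 := abs_sub_round ξ
  have habs2 : |B| ≤ 1/2 := abs_sub_round η
  have habs3 : |C| ≤ 1/2 := abs_sub_round ζ
  have hφ1 : φ 1 = (-1 : ℤˣ) ^ (⌊A + B + C⌋ + (round ξ + round η + round ζ)) := by
    rw [hφ 1, show ξ + η + ((((1:ℤˣ):ℤ)):ℝ) * ζ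
        = (A + B + C) + ((round ξ + round η + round ζ : ℤ) : ℝ) from by
      rw [hA, hB, hC]; push_cast [Units.val_one]; ring, Int.floor_add_intCast]
  have hφ2 : φ (-1) = (-1 : ℤˣ) ^ (⌊A + B - C⌋ + (round ξ + round η - round ζ)) := by
    rw [hφ (-1), show ξ + η + ((((-1:ℤˣ):ℤ)):ℝ) * ζ
        = (A + B - C) + ((round ξ + round η - round ζ : ℤ) : ℝ) from by
      rw [hA, hB, hC]; push_cast [Units.val_neg, Units.val_one]; ring, Int.floor_add_intCast]
  have hθ1 : θ 1 = (-1 : ℤˣ) ^ (⌊A - B + C⌋ + (round ξ - round η + round ζ)) := by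
    rw [hθ 1, show ξ - η + ((((1:ℤˣ):ℤ)):ℝ) * ζ
        = (A - B + C) + ((round ξ - round η + round ζ : ℤ) : ℝ) from by
      rw [hA, hB, hC]; push_cast [Units.val_one]; ring, Int.floor_add_intCast]
  have hθ2 : θ (-1) = (-1 : ℤˣ) ^ (⌊A - B - C⌋ + (round ξ - round η - round ζ)) := by
    rw [hθ (-1), show ξ - η + ((((-1:ℤˣ):ℤ)):ℝ) * ζ
        = (A - B - C) + ((round ξ - round η - round ζ : ℤ) : ℝ) from by
      rw [hA, hB, hC]; push_cast [Units.val_neg, Units.val_one]; ring, Int.floor_add_intCast]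
  have pA : A ≠ 0 := abs_pos.mp (by linarith)
  have pB : B ≠ 0 := abs_pos.mp (by linarith)
  have pC : C ≠ 0 := abs_pos.mp (by linarith)
  rcases pA.lt_or_gt with hA1 | hA1 <;> rcases pB.lt_or_gt with hB1 | hB1 <;>
    rcases pC.lt_or_gt with hC1 | hC1
  -- case A<0, B<0, C<0
  · rw [abs_of_neg hA1] at t1 t2 t3 habs1
    rw [abs_of_neg hB1] at t1 t2 t3 habs2
    rw [abs_of_neg hC1] at t1 t2 t3 habs3
    have f2 : ⌊A + B - C⌋ = -1 := floor_negone' _ (by linarith) (by linarith)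
    have f3 : ⌊A - B + C⌋ = -1 := floor_negone' _ (by linarith) (by linarith)
    have f4 : ⌊A - B - C⌋ = 0 := floor_zero' _ (by linarith) (by linarith)
    refine ⟨fun hfun => ?_, Or.inr (bij_of' θ ?_)⟩
    · have h := congrFun hfun (-1)
      rw [hφ2, hθ2, f2, f4] at h
      exact pow_ne' _ _ (by omega) h
    · rw [hθ1, hθ2, f3, f4]; exact pow_ne' _ _ (by omega)
  -- case A<0, B<0, C>0
  · rw [abs_of_neg hA1] at t1 t2 t3 habs1
    rw [abs_of_neg hB1] at t1 t2 t3 habs2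
    rw [abs_of_pos hC1] at t1 t2 t3 habs3
    have f1 : ⌊A + B + C⌋ = -1 := floor_negone' _ (by linarith) (by linarith)
    have f3 : ⌊A - B + C⌋ = 0 := floor_zero' _ (by linarith) (by linarith)
    have f4 : ⌊A - B - C⌋ = -1 := floor_negone' _ (by linarith) (by linarith)
    refine ⟨fun hfun => ?_, Or.inr (bij_of' θ ?_)⟩
    · have h := congrFun hfun 1
      rw [hφ1, hθ1, f1, f3] at h
      exact pow_ne' _ _ (by omega) h
    · rw [hθ1, hθ2, f3, f4]; exact pow_ne' _ _ (by omega)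
  -- case A<0, B>0, C<0
  · rw [abs_of_neg hA1] at t1 t2 t3 habs1
    rw [abs_of_pos hB1] at t1 t2 t3 habs2
    rw [abs_of_neg hC1] at t1 t2 t3 habs3
    have f1 : ⌊A + B + C⌋ = -1 := floor_negone' _ (by linarith) (by linarith)
    have f2 : ⌊A + B - C⌋ = 0 := floor_zero' _ (by linarith) (by linarith)
    have f4 : ⌊A - B - C⌋ = -1 := floor_negone' _ (by linarith) (by linarith)
    refine ⟨fun hfun => ?_, Or.inl (bij_of' φ ?_)⟩
    · have h := congrFun hfun (-1)
      rw [hφ2, hθ2, f2, f4] at h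
      exact pow_ne' _ _ (by omega) h
    · rw [hφ1, hφ2, f1, f2]; exact pow_ne' _ _ (by omega)
  -- case A<0, B>0, C>0
  · rw [abs_of_neg hA1] at t1 t2 t3 habs1
    rw [abs_of_pos hB1] at t1 t2 t3 habs2
    rw [abs_of_pos hC1] at t1 t2 t3 habs3
    have f1 : ⌊A + B + C⌋ = 0 := floor_zero' _ (by linarith) (by linarith)
    have f2 : ⌊A + B - C⌋ = -1 := floor_negone' _ (by linarith) (by linarith)
    have f3 : ⌊A - B + C⌋ = -1 := floor_negone' _ (by linarith) (by linarith)
    refine ⟨fun hfun => ?_, Or.inl (bij_of' φ ?_)⟩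
    · have h := congrFun hfun 1
      rw [hφ1, hθ1, f1, f3] at h
      exact pow_ne' _ _ (by omega) h
    · rw [hφ1, hφ2, f1, f2]; exact pow_ne' _ _ (by omega)
  -- case A>0, B<0, C<0
  · rw [abs_of_pos hA1] at t1 t2 t3 habs1
    rw [abs_of_neg hB1] at t1 t2 t3 habs2
    rw [abs_of_neg hC1] at t1 t2 t3 habs3
    have f1 : ⌊A + B + C⌋ = -1 := floor_negone' _ (by linarith) (by linarith)
    have f2 : ⌊A + B - C⌋ = 0 := floor_zero' _ (by linarith) (by linarith)
    have f3 : ⌊A - B + C⌋ = 0 := floor_zero' _ (by linarith) (by linarith)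
    refine ⟨fun hfun => ?_, Or.inl (bij_of' φ ?_)⟩
    · have h := congrFun hfun 1
      rw [hφ1, hθ1, f1, f3] at h
      exact pow_ne' _ _ (by omega) h
    · rw [hφ1, hφ2, f1, f2]; exact pow_ne' _ _ (by omega)
  -- case A>0, B<0, C>0
  · rw [abs_of_pos hA1] at t1 t2 t3 habs1
    rw [abs_of_neg hB1] at t1 t2 t3 habs2
    rw [abs_of_pos hC1] at t1 t2 t3 habs3
    have f1 : ⌊A + B + C⌋ = 0 := floor_zero' _ (by linarith) (by linarith)
    have f2 : ⌊A + B - C⌋ = -1 := floor_negone' _ (by linarith) (by linarith)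
    have f4 : ⌊A - B - C⌋ = 0 := floor_zero' _ (by linarith) (by linarith)
    refine ⟨fun hfun => ?_, Or.inl (bij_of' φ ?_)⟩
    · have h := congrFun hfun (-1)
      rw [hφ2, hθ2, f2, f4] at h
      exact pow_ne' _ _ (by omega) h
    · rw [hφ1, hφ2, f1, f2]; exact pow_ne' _ _ (by omega)
  -- case A>0, B>0, C<0
  · rw [abs_of_pos hA1] at t1 t2 t3 habs1
    rw [abs_of_pos hB1] at t1 t2 t3 habs2
    rw [abs_of_neg hC1] at t1 t2 t3 habs3
    have f1 : ⌊A + B + C⌋ = 0 := floor_zero' _ (by linarith) (by linarith)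
    have f3 : ⌊A - B + C⌋ = -1 := floor_negone' _ (by linarith) (by linarith)
    have f4 : ⌊A - B - C⌋ = 0 := floor_zero' _ (by linarith) (by linarith)
    refine ⟨fun hfun => ?_, Or.inr (bij_of' θ ?_)⟩
    · have h := congrFun hfun 1
      rw [hφ1, hθ1, f1, f3] at h
      exact pow_ne' _ _ (by omega) h
    · rw [hθ1, hθ2, f3, f4]; exact pow_ne' _ _ (by omega)
  -- case A>0, B>0, C>0
  · rw [abs_of_pos hA1] at t1 t2 t3 habs1
    rw [abs_of_pos hB1] at t1 t2 t3 habs2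
    rw [abs_of_pos hC1] at t1 t2 t3 habs3
    have f2 : ⌊A + B - C⌋ = 0 := floor_zero' _ (by linarith) (by linarith)
    have f3 : ⌊A - B + C⌋ = 0 := floor_zero' _ (by linarith) (by linarith)
    have f4 : ⌊A - B - C⌋ = -1 := floor_negone' _ (by linarith) (by linarith)
    refine ⟨fun hfun => ?_, Or.inr (bij_of' θ ?_)⟩
    · have h := congrFun hfun (-1)
      rw [hφ2, hθ2, f2, f4] at h
      exact pow_ne' _ _ (by omega) h
    · rw [hθ1, hθ2, f3, f4]; exact pow_ne' _ _ (by omega)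
end

section
/- Let a, b, c be distinct quasi-primes (each equal to 4 or an odd prime) with {a,b,c} ≠ {3,4,5}. Let 0 < d < a, 0 < e < b, 0 < f < c be odd integers coprime to a, b, c respectively. Set α = d/(2a), β = e/(2b), γ = f/(2c) and assume α < β < γ. Let u be the least positive integer with uα + β > γ. Then uα < 1/2 and the triple (uα, β, γ) is good. -/
/-- A positive integer is a *quasi-prime* if it equals `4` or is an odd prime. -/
def QuasiPrime (n : ℕ) : Prop := n = 4 ∨ (n.Prime ∧ Odd n)

lemma psi_eq_self {x : ℝ} (h0 : 0 ≤ x) (h1 : x < 1 / 2) : psi x = x := by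
  have hr : round x = 0 := by
    rw [round_eq]
    exact Int.floor_eq_zero_iff.mpr ⟨by linarith, by linarith⟩
  simp [psi, hr, abs_of_nonneg h0]

theorem lemma2_case_u (a b c : ℕ) (ha : QuasiPrime a) (hb : QuasiPrime b)
    (hc : QuasiPrime c) (hab : a ≠ b) (hac : a ≠ c) (hbc : b ≠ c)
    (h345 : ({a, b, c} : Finset ℕ) ≠ {3, 4, 5})
    (d e f : ℕ) (hd0 : 0 < d) (hda : d < a) (he0 : 0 < e) (heb : e < b)
    (hf0 : 0 < f) (hfc : f < c)
    (hdo : Odd d) (heo : Odd e) (hfo : Odd f)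
    (hdco : Nat.Coprime d a) (heco : Nat.Coprime e b) (hfco : Nat.Coprime f c)
    (α β γ : ℝ) (hα : α = d / (2 * a)) (hβ : β = e / (2 * b)) (hγ : γ = f / (2 * c))
    (hαβ : α < β) (hβγ : β < γ)
    (u : ℕ) (hu : IsLeast {m : ℕ | 0 < m ∧ γ < m * α + β} u) :
    u * α < 1 / 2 ∧ Good (u * α) β γ := by
  obtain ⟨⟨hu0, huγ⟩, hmin⟩ := hu
  have ha0 : (0:ℝ) < a := by
    have := lt_of_le_of_lt (Nat.zero_le d) hda; exact_mod_cast this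
  have hc0 : (0:ℝ) < c := by
    have := lt_of_le_of_lt (Nat.zero_le f) hfc; exact_mod_cast this
  have hd0' : (0:ℝ) < d := by exact_mod_cast hd0
  have hα0 : 0 < α := by rw [hα]; positivity
  have hβ0 : 0 < β := lt_trans hα0 hαβ
  have hγhalf : γ < 1 / 2 := by
    rw [hγ, div_lt_iff₀ (by positivity)]
    have hfc' : (f:ℝ) < c := by exact_mod_cast hfc
    linarith
  -- u * α < γ
  have huαγ : (u:ℝ) * α < γ := by
    rcases eq_or_lt_of_le (Nat.one_le_iff_ne_zero.mpr hu0.ne') with h1 | h2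
    · rw [← h1]; push_cast; linarith
    · -- u ≥ 2, so u - 1 is not in the set
      have hnot : ¬ (0 < u - 1 ∧ γ < (↑(u - 1) : ℝ) * α + β) := by
        intro hmem
        have := hmin hmem
        omega
      have hpos : 0 < u - 1 := by omega
      have hle : (↑(u - 1) : ℝ) * α + β ≤ γ := by
        by_contra hlt
        exact hnot ⟨hpos, lt_of_not_ge hlt⟩
      have hcast : (↑(u - 1) : ℝ) = (u:ℝ) - 1 := by
        have : ((u : ℕ) : ℝ) - 1 = ((u - 1 : ℕ) : ℝ) := by
          push_cast [Nat.cast_sub (by omega : 1 ≤ u)]; ring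
        linarith [this]
      rw [hcast] at hle
      nlinarith
  have h1 : (u:ℝ) * α < 1 / 2 := lt_trans huαγ hγhalf
  refine ⟨h1, ?_⟩
  have huα0 : 0 ≤ (u:ℝ) * α := by positivity
  rw [Good, psi_eq_self huα0 h1, psi_eq_self hβ0.le (lt_trans hβγ hγhalf),
    psi_eq_self (lt_trans hβ0 hβγ).le hγhalf]
  rw [max_eq_right hβγ.le, max_eq_right huαγ.le]
  linarith
end

section
/- If X, Y, Z ∈ SU(2) have traces 2cos(rπ/a), 2cos(sπ/b), 2cos(tπ/c) respectively, where r,s,t,a,b,c are positive integers with r/a + s/b + t/c < 1, then the trace of XYZ is strictly greater than -2; in particular XYZ ≠ -I. -/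
set_option maxHeartbeats 1000000

open Matrix Real

/-- Structure of SU(2) elements. -/
lemma su2_struct (U : specialUnitaryGroup (Fin 2) ℂ) :
    ∃ p q : ℂ, (U : Matrix (Fin 2) (Fin 2) ℂ) = !![p, q; -(starRingEnd ℂ) q, (starRingEnd ℂ) p] ∧
      Complex.normSq p + Complex.normSq q = 1 := by
  obtain ⟨hu, hdet⟩ := mem_specialUnitaryGroup_iff.mp U.2
  set M : Matrix (Fin 2) (Fin 2) ℂ := (U : Matrix (Fin 2) (Fin 2) ℂ) with hM
  have hstar : star M * M = 1 := hu.1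
  have hinv : M⁻¹ = star M := Matrix.inv_eq_left_inv hstar
  have hadj : M⁻¹ = M.adjugate := by
    rw [Matrix.inv_def, hdet]; simp
  have h2 : star M = M.adjugate := by rw [← hinv, hadj]
  have key : ∀ i j, (starRingEnd ℂ) (M j i) = M.adjugate i j := by
    intro i j
    have := congrFun (congrFun h2 i) j
    simpa [Matrix.star_apply] using this
  have h11 : M 1 1 = (starRingEnd ℂ) (M 0 0) := by
    have h := key 1 1; rw [Matrix.adjugate_fin_two] at h
    norm_num [Matrix.cons_val_one, Matrix.head_cons] at h
    rw [← h, Complex.conj_conj]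
  have h10 : M 1 0 = -(starRingEnd ℂ) (M 0 1) := by
    have h := key 0 1; rw [Matrix.adjugate_fin_two] at h
    norm_num [Matrix.cons_val_one, Matrix.head_cons] at h
    rw [← Complex.conj_conj (M 1 0), h, map_neg]
  refine ⟨M 0 0, M 0 1, ?_, ?_⟩
  · conv_lhs => rw [Matrix.eta_fin_two M]
    rw [h11, h10]
  · have hd : M 0 0 * M 1 1 - M 0 1 * M 1 0 = 1 := by
      rw [← Matrix.det_fin_two]; exact hdet
    rw [h11, h10] at hd
    have : (↑(Complex.normSq (M 0 0) + Complex.normSq (M 0 1)) : ℂ) = 1 := by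
      push_cast
      rw [Complex.normSq_eq_conj_mul_self, Complex.normSq_eq_conj_mul_self]
      ring_nf
      ring_nf at hd
      linear_combination hd
    exact_mod_cast this

lemma su2_key (U V : specialUnitaryGroup (Fin 2) ℂ) :
    2 * Real.cos (Real.arccos (((U : Matrix (Fin 2) (Fin 2) ℂ).trace).re / 2)
        + Real.arccos (((V : Matrix (Fin 2) (Fin 2) ℂ).trace).re / 2))
      ≤ (((U * V : specialUnitaryGroup (Fin 2) ℂ) : Matrix (Fin 2) (Fin 2) ℂ).trace).re := by
  obtain ⟨p, q, hU, hpq⟩ := su2_struct U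
  obtain ⟨u, v, hV, huv⟩ := su2_struct V
  have hcoe : ((U * V : specialUnitaryGroup (Fin 2) ℂ) : Matrix (Fin 2) (Fin 2) ℂ)
      = (U : Matrix (Fin 2) (Fin 2) ℂ) * (V : Matrix (Fin 2) (Fin 2) ℂ) := by
    norm_cast
  have htrU : ((U : Matrix (Fin 2) (Fin 2) ℂ).trace).re = 2 * p.re := by
    rw [hU, Matrix.trace_fin_two]
    simp [Complex.add_re, Complex.conj_re]; ring
  have htrV : ((V : Matrix (Fin 2) (Fin 2) ℂ).trace).re = 2 * u.re := by
    rw [hV, Matrix.trace_fin_two]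
    simp [Complex.add_re, Complex.conj_re]; ring
  have htrUV : (((U * V : specialUnitaryGroup (Fin 2) ℂ) : Matrix (Fin 2) (Fin 2) ℂ).trace).re
      = 2 * (p.re * u.re - p.im * u.im - q.re * v.re - q.im * v.im) := by
    rw [hcoe, hU, hV, Matrix.mul_fin_two, Matrix.trace_fin_two]
    simp [Complex.add_re, Complex.mul_re, Complex.sub_re, Complex.neg_re,
      Complex.conj_re, Complex.conj_im]
    ring
  have hnp : Complex.normSq p = p.re ^ 2 + p.im ^ 2 := by rw [Complex.normSq_apply]; ring
  have hnq : Complex.normSq q = q.re ^ 2 + q.im ^ 2 := by rw [Complex.normSq_apply]; ring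
  have hnu : Complex.normSq u = u.re ^ 2 + u.im ^ 2 := by rw [Complex.normSq_apply]; ring
  have hnv : Complex.normSq v = v.re ^ 2 + v.im ^ 2 := by rw [Complex.normSq_apply]; ring
  rw [hnp, hnq] at hpq; rw [hnu, hnv] at huv
  have hp1 : -1 ≤ p.re := by nlinarith [sq_nonneg p.im, sq_nonneg q.re, sq_nonneg q.im, sq_nonneg (p.re + 1)]
  have hp2 : p.re ≤ 1 := by nlinarith [sq_nonneg p.im, sq_nonneg q.re, sq_nonneg q.im, sq_nonneg (p.re - 1)]
  have hu1 : -1 ≤ u.re := by nlinarith [sq_nonneg u.im, sq_nonneg v.re, sq_nonneg v.im, sq_nonneg (u.re + 1)]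
  have hu2 : u.re ≤ 1 := by nlinarith [sq_nonneg u.im, sq_nonneg v.re, sq_nonneg v.im, sq_nonneg (u.re - 1)]
  rw [htrU, htrV, htrUV]
  have e1 : (2 * p.re) / 2 = p.re := by ring
  have e2 : (2 * u.re) / 2 = u.re := by ring
  rw [e1, e2, Real.cos_add, Real.cos_arccos hp1 hp2, Real.cos_arccos hu1 hu2,
    Real.sin_arccos, Real.sin_arccos]
  set A := Real.sqrt (1 - p.re ^ 2) with hA
  set B := Real.sqrt (1 - u.re ^ 2) with hB
  have hA0 : 0 ≤ A := Real.sqrt_nonneg _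
  have hB0 : 0 ≤ B := Real.sqrt_nonneg _
  have hA2 : A ^ 2 = 1 - p.re ^ 2 := Real.sq_sqrt (by nlinarith)
  have hB2 : B ^ 2 = 1 - u.re ^ 2 := Real.sq_sqrt (by nlinarith)
  have hA2' : A ^ 2 = p.im ^ 2 + q.re ^ 2 + q.im ^ 2 := by rw [hA2]; linarith
  have hB2' : B ^ 2 = u.im ^ 2 + v.re ^ 2 + v.im ^ 2 := by rw [hB2]; linarith
  set S := p.im * u.im + q.re * v.re + q.im * v.im with hS
  have hSq : S ^ 2 ≤ (A * B) ^ 2 := by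
    have h1 := sq_nonneg (p.im * v.re - q.re * u.im)
    have h2 := sq_nonneg (p.im * v.im - q.im * u.im)
    have h3 := sq_nonneg (q.re * v.im - q.im * v.re)
    have hLag : S ^ 2 = (A * B) ^ 2 - ((p.im * v.re - q.re * u.im) ^ 2
        + (p.im * v.im - q.im * u.im) ^ 2 + (q.re * v.im - q.im * v.re) ^ 2) := by
      rw [hS, mul_pow, hA2', hB2']; ring
    linarith
  have hSle : S ≤ A * B := by nlinarith [mul_nonneg hA0 hB0]
  nlinarith [hSle]

lemma su2_trace_re_bound (U : specialUnitaryGroup (Fin 2) ℂ) :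
    -2 ≤ ((U : Matrix (Fin 2) (Fin 2) ℂ).trace).re ∧
      ((U : Matrix (Fin 2) (Fin 2) ℂ).trace).re ≤ 2 := by
  obtain ⟨p, q, hU, hpq⟩ := su2_struct U
  have htr : ((U : Matrix (Fin 2) (Fin 2) ℂ).trace).re = 2 * p.re := by
    rw [hU, Matrix.trace_fin_two]
    simp [Complex.add_re, Complex.conj_re]; ring
  have hnp : Complex.normSq p = p.re ^ 2 + p.im ^ 2 := by rw [Complex.normSq_apply]; ring
  have hnq : Complex.normSq q = q.re ^ 2 + q.im ^ 2 := by rw [Complex.normSq_apply]; ring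
  rw [hnp, hnq] at hpq
  constructor
  · rw [htr]
    nlinarith [sq_nonneg p.im, sq_nonneg q.re, sq_nonneg q.im, sq_nonneg (p.re + 1)]
  · rw [htr]
    nlinarith [sq_nonneg p.im, sq_nonneg q.re, sq_nonneg q.im, sq_nonneg (p.re - 1)]

theorem su2_product_trace (a b c r s t : ℕ) (ha : 0 < a) (hb : 0 < b) (hc : 0 < c)
    (hr : 0 < r) (hs : 0 < s) (ht : 0 < t)
    (hsum : (r : ℝ) / a + (s : ℝ) / b + (t : ℝ) / c < 1)
    (X Y Z : specialUnitaryGroup (Fin 2) ℂ)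
    (hX : (X : Matrix (Fin 2) (Fin 2) ℂ).trace = ((2 * Real.cos (r * π / a) : ℝ) : ℂ))
    (hY : (Y : Matrix (Fin 2) (Fin 2) ℂ).trace = ((2 * Real.cos (s * π / b) : ℝ) : ℂ))
    (hZ : (Z : Matrix (Fin 2) (Fin 2) ℂ).trace = ((2 * Real.cos (t * π / c) : ℝ) : ℂ)) :
    -2 < (((X * Y * Z : specialUnitaryGroup (Fin 2) ℂ) :
        Matrix (Fin 2) (Fin 2) ℂ).trace).re ∧
    ((X * Y * Z : specialUnitaryGroup (Fin 2) ℂ) : Matrix (Fin 2) (Fin 2) ℂ) ≠ -1 := by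
  have hpi := Real.pi_pos
  set α := (r : ℝ) * π / a with hαdef
  set β := (s : ℝ) * π / b with hβdef
  set γ := (t : ℝ) * π / c with hγdef
  have ha' : (0 : ℝ) < a := by exact_mod_cast ha
  have hb' : (0 : ℝ) < b := by exact_mod_cast hb
  have hc' : (0 : ℝ) < c := by exact_mod_cast hc
  have hr' : (1 : ℝ) ≤ r := by exact_mod_cast hr
  have hs' : (1 : ℝ) ≤ s := by exact_mod_cast hs
  have ht' : (1 : ℝ) ≤ t := by exact_mod_cast ht
  have hra : (r : ℝ) / a > 0 := by positivity
  have hsb : (s : ℝ) / b > 0 := by positivity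
  have htc : (t : ℝ) / c > 0 := by positivity
  have hα0 : 0 < α := by rw [hαdef]; positivity
  have hβ0 : 0 < β := by rw [hβdef]; positivity
  have hγ0 : 0 < γ := by rw [hγdef]; positivity
  have hαeq : α = ((r : ℝ) / a) * π := by rw [hαdef]; ring
  have hβeq : β = ((s : ℝ) / b) * π := by rw [hβdef]; ring
  have hγeq : γ = ((t : ℝ) / c) * π := by rw [hγdef]; ring
  have hsumπ : α + β + γ < π := by
    rw [hαeq, hβeq, hγeq]
    calc (r : ℝ) / a * π + (s : ℝ) / b * π + (t : ℝ) / c * π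
        = ((r : ℝ) / a + (s : ℝ) / b + (t : ℝ) / c) * π := by ring
      _ < 1 * π := by exact mul_lt_mul_of_pos_right hsum hpi
      _ = π := one_mul π
  have hαπ : α ≤ π := by linarith
  have hβπ : β ≤ π := by linarith
  have hγπ : γ ≤ π := by linarith
  have hfX : ((X : Matrix (Fin 2) (Fin 2) ℂ).trace).re = 2 * Real.cos α := by
    rw [hX]; exact Complex.ofReal_re _
  have hfY : ((Y : Matrix (Fin 2) (Fin 2) ℂ).trace).re = 2 * Real.cos β := by
    rw [hY]; exact Complex.ofReal_re _
  have hfZ : ((Z : Matrix (Fin 2) (Fin 2) ℂ).trace).re = 2 * Real.cos γ := by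
    rw [hZ]; exact Complex.ofReal_re _
  have haX : Real.arccos (((X : Matrix (Fin 2) (Fin 2) ℂ).trace).re / 2) = α := by
    rw [hfX]; rw [show 2 * Real.cos α / 2 = Real.cos α by ring]
    exact Real.arccos_cos hα0.le hαπ
  have haY : Real.arccos (((Y : Matrix (Fin 2) (Fin 2) ℂ).trace).re / 2) = β := by
    rw [hfY]; rw [show 2 * Real.cos β / 2 = Real.cos β by ring]
    exact Real.arccos_cos hβ0.le hβπ
  have haZ : Real.arccos (((Z : Matrix (Fin 2) (Fin 2) ℂ).trace).re / 2) = γ := by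
    rw [hfZ]; rw [show 2 * Real.cos γ / 2 = Real.cos γ by ring]
    exact Real.arccos_cos hγ0.le hγπ
  have key1 := su2_key X Y
  rw [haX, haY] at key1
  set fXY := (((X * Y : specialUnitaryGroup (Fin 2) ℂ) : Matrix (Fin 2) (Fin 2) ℂ).trace).re
    with hfXY
  set δ := Real.arccos (fXY / 2) with hδ
  have hδ0 : 0 ≤ δ := Real.arccos_nonneg _
  have hδπ : δ ≤ π := Real.arccos_le_pi _
  obtain ⟨hbl, hbr⟩ := su2_trace_re_bound (X * Y)
  have hb1 : -1 ≤ fXY / 2 := by rw [hfXY]; linarith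
  have hb2 : fXY / 2 ≤ 1 := by rw [hfXY]; linarith
  have hcosδ : Real.cos δ = fXY / 2 := Real.cos_arccos hb1 hb2
  have hδle : δ ≤ α + β := by
    by_contra h
    push_neg at h
    have := Real.cos_lt_cos_of_nonneg_of_le_pi (by linarith : (0:ℝ) ≤ α + β) hδπ h
    rw [hcosδ] at this
    linarith
  have key2 := su2_key (X * Y) Z
  rw [haZ, ← hfXY, ← hδ] at key2
  have hδγ : δ + γ < π := by linarith
  have hcosfin : Real.cos π < Real.cos (δ + γ) :=
    Real.cos_lt_cos_of_nonneg_of_le_pi (by linarith) (le_refl π) hδγ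
  rw [Real.cos_pi] at hcosfin
  have hmain : -2 < (((X * Y * Z : specialUnitaryGroup (Fin 2) ℂ) :
      Matrix (Fin 2) (Fin 2) ℂ).trace).re := by linarith
  refine ⟨hmain, ?_⟩
  intro hcontr
  have h2 : (((X * Y * Z : specialUnitaryGroup (Fin 2) ℂ) :
      Matrix (Fin 2) (Fin 2) ℂ).trace).re = -2 := by
    rw [hcontr]
    rw [show (-1 : Matrix (Fin 2) (Fin 2) ℂ) = -(1 : Matrix (Fin 2) (Fin 2) ℂ) from rfl,
      Matrix.trace_neg, Matrix.trace_one]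
    simp
  linarith
end

section
/- In the group β = ⟨v₁, v₂, v₃, v₄ | v_i^{a_i} = 1 (i=1..4), v₁v₂v₃v₄ = 1⟩, if gcd(a₁,a₂) = 1 and gcd(a₃,a₄) = 1, then v₁v₂ normally generates β. -/
/-- Relators of the presentation
`⟨v₁,v₂,v₃,v₄ | v₁^{a₁} = v₂^{a₂} = v₃^{a₃} = v₄^{a₄} = v₁v₂v₃v₄ = 1⟩`
of the orbifold fundamental group of `S²(a₁,a₂,a₃,a₄)`. -/
def relsQuad (a₁ a₂ a₃ a₄ : ℕ) : Set (FreeGroup (Fin 4)) :=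
  { FreeGroup.of 0 ^ a₁, FreeGroup.of 1 ^ a₂, FreeGroup.of 2 ^ a₃, FreeGroup.of 3 ^ a₄,
    FreeGroup.of 0 * FreeGroup.of 1 * FreeGroup.of 2 * FreeGroup.of 3 }

theorem quad_group_weight_one (a₁ a₂ a₃ a₄ : ℕ)
    (h12 : Nat.Coprime a₁ a₂) (h34 : Nat.Coprime a₃ a₄) :
    Subgroup.normalClosure
      ({PresentedGroup.of 0 * PresentedGroup.of 1} :
        Set (PresentedGroup (relsQuad a₁ a₂ a₃ a₄))) = ⊤ := by
  set rels := relsQuad a₁ a₂ a₃ a₄ with hrels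
  set N := Subgroup.normalClosure
      ({PresentedGroup.of 0 * PresentedGroup.of 1} : Set (PresentedGroup rels)) with hN
  -- relations in the presented group
  have hrel : ∀ r ∈ rels, PresentedGroup.mk rels r = 1 := fun r hr =>
    (QuotientGroup.eq_one_iff r).2 (Subgroup.subset_normalClosure hr)
  have h1 : (PresentedGroup.of (0 : Fin 4) : PresentedGroup rels) ^ a₁ = 1 := by
    rw [PresentedGroup.of, ← map_pow]
    exact hrel (FreeGroup.of 0 ^ a₁) (by rw [hrels, relsQuad]; left; rfl)
  have h2 : (PresentedGroup.of (1 : Fin 4) : PresentedGroup rels) ^ a₂ = 1 := by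
    rw [PresentedGroup.of, ← map_pow]
    exact hrel (FreeGroup.of 1 ^ a₂) (by rw [hrels, relsQuad]; right; left; rfl)
  have h3 : (PresentedGroup.of (2 : Fin 4) : PresentedGroup rels) ^ a₃ = 1 := by
    rw [PresentedGroup.of, ← map_pow]
    exact hrel (FreeGroup.of 2 ^ a₃) (by rw [hrels, relsQuad]; right; right; left; rfl)
  have h4 : (PresentedGroup.of (3 : Fin 4) : PresentedGroup rels) ^ a₄ = 1 := by
    rw [PresentedGroup.of, ← map_pow]
    exact hrel (FreeGroup.of 3 ^ a₄) (by rw [hrels, relsQuad]; right; right; right; left; rfl)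
  have h5 : (PresentedGroup.of 0 * PresentedGroup.of 1 * PresentedGroup.of 2 *
      PresentedGroup.of 3 : PresentedGroup rels) = 1 := by
    show PresentedGroup.mk rels (FreeGroup.of 0) * PresentedGroup.mk rels (FreeGroup.of 1) *
      PresentedGroup.mk rels (FreeGroup.of 2) * PresentedGroup.mk rels (FreeGroup.of 3) = 1
    rw [← map_mul, ← map_mul, ← map_mul]
    exact hrel (FreeGroup.of 0 * FreeGroup.of 1 * FreeGroup.of 2 * FreeGroup.of 3)
      (by rw [hrels, relsQuad]; right; right; right; right; rfl)
  -- the quotient map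
  set f := QuotientGroup.mk' N with hfdef
  have hmem : (PresentedGroup.of 0 * PresentedGroup.of 1 : PresentedGroup rels) ∈ N :=
    Subgroup.subset_normalClosure rfl
  have hf12 : f (PresentedGroup.of 0) * f (PresentedGroup.of 1) = 1 := by
    rw [← map_mul]; exact (QuotientGroup.eq_one_iff _).2 hmem
  have hf34 : f (PresentedGroup.of 2) * f (PresentedGroup.of 3) = 1 := by
    have := congrArg f h5
    simp only [map_mul, map_one] at this
    rw [mul_assoc (f (PresentedGroup.of 0) * f (PresentedGroup.of 1)), hf12, one_mul] at this
    exact this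
  have key : ∀ (m n : ℕ) (u v : PresentedGroup rels ⧸ N), Nat.Coprime m n →
      u ^ m = 1 → v ^ n = 1 → u * v = 1 → u = 1 ∧ v = 1 := by
    intro m n u v hco hm hn huv
    have hv : v = u⁻¹ := eq_inv_of_mul_eq_one_right huv
    have hn' : u ^ n = 1 := by
      have := congrArg (· ^ n) hv
      simp only [inv_pow, hn, one_pow] at this
      simpa using congrArg (·⁻¹) this.symm
    have hd : orderOf u ∣ Nat.gcd m n :=
      Nat.dvd_gcd (orderOf_dvd_of_pow_eq_one hm) (orderOf_dvd_of_pow_eq_one hn')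
    rw [hco] at hd
    have hu : u = 1 := orderOf_eq_one_iff.1 (Nat.dvd_one.mp hd)
    exact ⟨hu, by simp [hv, hu]⟩
  have hpow1 : f (PresentedGroup.of 0) ^ a₁ = 1 := by rw [← map_pow, h1, map_one]
  have hpow2 : f (PresentedGroup.of 1) ^ a₂ = 1 := by rw [← map_pow, h2, map_one]
  have hpow3 : f (PresentedGroup.of 2) ^ a₃ = 1 := by rw [← map_pow, h3, map_one]
  have hpow4 : f (PresentedGroup.of 3) ^ a₄ = 1 := by rw [← map_pow, h4, map_one]
  obtain ⟨hx0, hx1⟩ := key a₁ a₂ _ _ h12 hpow1 hpow2 hf12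
  obtain ⟨hx2, hx3⟩ := key a₃ a₄ _ _ h34 hpow3 hpow4 hf34
  have hf1 : f = 1 := by
    apply PresentedGroup.ext
    intro x
    fin_cases x <;> simp only [MonoidHom.one_apply] <;>
      first | exact hx0 | exact hx1 | exact hx2 | exact hx3
  calc N = f.ker := (QuotientGroup.ker_mk' N).symm
    _ = ⊤ := by rw [hf1]; exact MonoidHom.ker_one
end
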